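/- Let Φ = f + g with f : ℝ^d → ℝ convex with L-Lipschitz gradient and g : ℝ^d → ℝ continuous convex, let x⋆ be a minimizer of Φ, and let 0 < s ≤ 1/L. For the ISTA iterates x_k = x_{k−1} − s·G_s(x_{k−1}) starting from any x₀ ∈ ℝ^d, one has lim_{k→∞} k(k+1) · min_{0 ≤ i ≤ k} ‖G_s(x_i)‖² = 0. -/

import Mathlib

/-!
One ISTA step from `z` to `p = z - s G` satisfies, for every `y`,
`Φ p ≤ Φ y + ⟪G, z - y⟫ - (s/2)‖G‖²`: add the descent lemma for `f` (this is where `s L ≤ 1`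
enters), the gradient inequality for the convex `f`, and the optimality condition of the prox
step for `g`. With `y = z` this is the descent `a (k+1) + (s/2) b k ≤ a k` for
`a k = Φ (x k) - Φ x⋆` and `b k = ‖G (x k)‖²`; with `y = x⋆` it telescopes in `‖x k - x⋆‖²`,
so `a` is summable. Being nonincreasing and summable, `a` is `o(1/k)`, and summing the descent
over `k/2 ≤ i < k` gives `k (k+1) min_{i ≤ k} b i ≤ (8/s) (k/2 + 1) a (k/2) → 0`.
-/

open scoped RealInnerProductSpace Topology
open Filter

section Sequences

open Finset

theorem Antitone.tendsto_nat_mul_of_summable {a : ℕ → ℝ} (ha : Antitone a) (hsum : Summable a) :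
    Tendsto (fun n : ℕ => (n : ℝ) * a n) atTop (𝓝 0) := by
  have hnonneg (n : ℕ) : 0 ≤ a n := ha.le_of_tendsto hsum.tendsto_atTop_zero n
  have hbound (n : ℕ) : (n : ℝ) * a n ≤ 2 * ∑' k, a (k + n / 2) := by
    have hhalf : (n : ℝ) ≤ 2 * ((n - n / 2 : ℕ) : ℝ) := by exact_mod_cast (by omega)
    have hblock : ((n - n / 2 : ℕ) : ℝ) * a n ≤ ∑' k, a (k + n / 2) := calc
      ((n - n / 2 : ℕ) : ℝ) * a n ≤ ∑ k ∈ range (n - n / 2), a (k + n / 2) := by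
        simpa using card_nsmul_le_sum (range (n - n / 2)) (fun k => a (k + n / 2)) (a n)
          fun k hk => ha (by rw [mem_range] at hk; omega)
      _ ≤ ∑' k, a (k + n / 2) :=
        ((summable_nat_add_iff _).2 hsum).sum_le_tsum _ fun k _ => hnonneg _
    nlinarith [hnonneg n]
  have htail : Tendsto (fun n : ℕ => 2 * ∑' k, a (k + n / 2)) atTop (𝓝 0) := by
    simpa using ((tendsto_sum_nat_add a).comp (Nat.tendsto_div_const_atTop two_ne_zero)).const_mul 2
  exact squeeze_zero (fun n => mul_nonneg n.cast_nonneg (hnonneg n)) hbound htail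

theorem summable_of_mul_succ_le_sub {a r : ℕ → ℝ} {c : ℝ} (hc : 0 < c) (ha : ∀ k, 0 ≤ a k)
    (hr : ∀ k, 0 ≤ r k) (h : ∀ k, c * a (k + 1) ≤ r k - r (k + 1)) : Summable a := by
  refine (summable_nat_add_iff 1).1 <| summable_of_sum_range_le (c := r 0 / c)
    (fun k => ha _) fun n => ?_
  rw [le_div_iff₀ hc, sum_mul]
  calc ∑ k ∈ range n, a (k + 1) * c ≤ ∑ k ∈ range n, (r k - r (k + 1)) :=
        sum_le_sum fun k _ => by linarith [h k]
    _ = r 0 - r n := sum_range_sub' r n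
    _ ≤ r 0 := sub_le_self _ (hr n)

theorem sum_Ico_le_sub_of_succ_add_le {a b : ℕ → ℝ} (h : ∀ k, a (k + 1) + b k ≤ a k) {m n : ℕ}
    (hmn : m ≤ n) : ∑ k ∈ Ico m n, b k ≤ a m - a n := calc
  ∑ k ∈ Ico m n, b k ≤ ∑ k ∈ Ico m n, -(a (k + 1) - a k) :=
    sum_le_sum fun k _ => by linarith [h k]
  _ = a m - a n := by rw [sum_neg_distrib, sum_Ico_sub a hmn, neg_sub]

theorem mul_succ_mul_inf'_le_of_succ_add_le {a b : ℕ → ℝ} {c : ℝ} (hc : 0 < c)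
    (ha : ∀ k, 0 ≤ a k) (hb : ∀ k, 0 ≤ b k) (h : ∀ k, a (k + 1) + c * b k ≤ a k) (k : ℕ) :
    c * ((k : ℝ) * (k + 1) * (range (k + 1)).inf' nonempty_range_add_one b) ≤
      4 * (((k / 2 : ℕ) : ℝ) + 1) * a (k / 2) := by
  set m := k / 2
  set B := (range (k + 1)).inf' nonempty_range_add_one b
  have hB : 0 ≤ B := le_inf' _ _ fun i _ => hb i
  have hblock : c * (((k - m : ℕ) : ℝ) * B) ≤ a m := calc
    c * (((k - m : ℕ) : ℝ) * B) ≤ ∑ i ∈ Ico m k, c * b i := by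
      simpa [mul_left_comm c] using card_nsmul_le_sum (Ico m k) (fun i => c * b i) (c * B)
        fun i hi => mul_le_mul_of_nonneg_left
          (inf'_le _ (mem_range.2 (by rw [mem_Ico] at hi; omega))) hc.le
    _ ≤ a m - a k := sum_Ico_le_sub_of_succ_add_le h (Nat.div_le_self k 2)
    _ ≤ a m := sub_le_self _ (ha k)
  have hk : (k : ℝ) ≤ 2 * ((k - m : ℕ) : ℝ) := by exact_mod_cast (by omega)
  have hk1 : (k : ℝ) + 1 ≤ 2 * ((m : ℝ) + 1) := by exact_mod_cast (by omega)
  nlinarith [mul_le_mul_of_nonneg_right hk (by positivity : 0 ≤ c * ((k + 1) * B)),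
    mul_le_mul_of_nonneg_right hk1 (by positivity : 0 ≤ c * (((k - m : ℕ) : ℝ) * B)),
    mul_le_mul_of_nonneg_left hblock (by positivity : (0 : ℝ) ≤ 2 * ((m : ℝ) + 1))]

theorem tendsto_mul_succ_mul_inf'_of_succ_add_le {a b : ℕ → ℝ} {c : ℝ} (hc : 0 < c)
    (hb : ∀ k, 0 ≤ b k) (h : ∀ k, a (k + 1) + c * b k ≤ a k) (hsum : Summable a) :
    Tendsto (fun k : ℕ => (k : ℝ) * (k + 1) * (range (k + 1)).inf' nonempty_range_add_one b)
      atTop (𝓝 0) := by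
  have hanti : Antitone a :=
    antitone_nat_of_succ_le fun k => by nlinarith [h k, mul_nonneg hc.le (hb k)]
  have ha (k : ℕ) : 0 ≤ a k := hanti.le_of_tendsto hsum.tendsto_atTop_zero k
  have hlim : Tendsto (fun k : ℕ => 4 * (((k / 2 : ℕ) : ℝ) + 1) * a (k / 2) / c) atTop (𝓝 0) := by
    have hsucc : Tendsto (fun n : ℕ => ((n : ℝ) + 1) * a n) atTop (𝓝 0) := by
      simpa [add_mul] using (hanti.tendsto_nat_mul_of_summable hsum).add hsum.tendsto_atTop_zero
    simpa [mul_assoc] using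
      ((hsucc.comp (Nat.tendsto_div_const_atTop two_ne_zero)).const_mul 4).div_const c
  refine squeeze_zero (fun k => mul_nonneg (by positivity) (le_inf' _ _ fun i _ => hb i))
    (fun k => ?_) hlim
  rw [le_div_iff₀ hc, mul_comm]
  exact mul_succ_mul_inf'_le_of_succ_add_le hc ha hb h k

end Sequences

section Calculus

open Set

variable {E : Type*} [NormedAddCommGroup E] [InnerProductSpace ℝ E]

theorem HasDerivAt.nonneg_of_isMinOn_Icc {φ : ℝ → ℝ} {φ' : ℝ} (hφ : HasDerivAt φ φ' 0)
    (hmin : IsMinOn φ (Icc 0 1) 0) : 0 ≤ φ' := by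
  have hcone : (1 : ℝ) ∈ posTangentConeAt (Icc (0 : ℝ) 1) 0 :=
    mem_posTangentConeAt_of_segment_subset (by simp [segment_eq_Icc])
  simpa using hmin.localize.hasFDerivWithinAt_nonneg
    hφ.hasFDerivAt.hasFDerivWithinAt hcone

theorem ConvexOn.add_inner_le_of_isMinOn_prox {g : E → ℝ} {s : ℝ} {w p : E}
    (hg : ConvexOn ℝ univ g) (hp : IsMinOn (fun z => 1 / (2 * s) * ‖z - w‖ ^ 2 + g z) univ p)
    (z : E) : g p + ⟪s⁻¹ • (w - p), z - p⟫ ≤ g z := by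
  set u := z - p
  -- replacing `g` on the segment `[p, z]` by its chord gives a differentiable majorant of the
  -- prox objective that is still minimal at `t = 0`
  have hderiv : HasDerivAt
      (fun t : ℝ => 1 / (2 * s) * ‖p - w + t • u‖ ^ 2 + (1 - t) * g p + t * g z)
      (s⁻¹ * ⟪p - w, u⟫ + (g z - g p)) 0 := by
    have hline : HasDerivAt (fun t : ℝ => p - w + t • u) u 0 := by
      simpa using ((hasDerivAt_id (0 : ℝ)).smul_const u).const_add (p - w)
    have := ((hline.norm_sq.const_mul (1 / (2 * s))).add
      (((hasDerivAt_id 0).const_sub 1).mul_const (g p))).add ((hasDerivAt_id 0).mul_const (g z))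
    refine this.congr_deriv ?_
    simp only [zero_smul, add_zero]
    ring
  suffices 0 ≤ s⁻¹ * ⟪p - w, u⟫ + (g z - g p) by
    rw [← neg_sub p w, smul_neg, inner_neg_left, real_inner_smul_left]
    linarith
  refine hderiv.nonneg_of_isMinOn_Icc fun t ⟨ht0, ht1⟩ => ?_
  have hconv := hg.2 (mem_univ p) (mem_univ z) (sub_nonneg.2 ht1) ht0 (sub_add_cancel 1 t)
  have hpt : (1 - t) • p + t • z = p + t • u := by
    rw [smul_sub, sub_smul, one_smul]; abel
  have hmin := hp (mem_univ (p + t • u))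
  simp only [mem_ofPred_eq, hpt, smul_eq_mul] at hconv hmin ⊢
  simp only [zero_smul, add_zero, sub_zero, one_mul, zero_mul, add_sub_right_comm] at hmin ⊢
  linarith

theorem two_mul_le_norm_sub_sq_sub_norm_sub_smul_sub_sq {Δ s : ℝ} {z y G : E} (hs : 0 ≤ s)
    (h : Δ ≤ ⟪G, z - y⟫ - s / 2 * ‖G‖ ^ 2) :
    2 * s * Δ ≤ ‖z - y‖ ^ 2 - ‖z - s • G - y‖ ^ 2 := by
  rw [sub_right_comm, norm_sub_sq_real (z - y), real_inner_smul_right, norm_smul, Real.norm_eq_abs,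
    abs_of_nonneg hs, real_inner_comm]
  nlinarith [mul_le_mul_of_nonneg_left h (by positivity : 0 ≤ 2 * s)]

variable [CompleteSpace E]

theorem HasGradientAt.hasDerivAt_comp_add_smul {f : E → ℝ} {f' x v : E} {t : ℝ}
    (hf : HasGradientAt f f' (x + t • v)) :
    HasDerivAt (fun t : ℝ => f (x + t • v)) ⟪f', v⟫ t := by
  have hline : HasDerivAt (fun t : ℝ => x + t • v) v t := by
    simpa using ((hasDerivAt_id t).smul_const v).const_add x
  have hcomp := hf.hasFDerivAt.comp_hasDerivAt t hline
  simp only [Function.comp_def, InnerProductSpace.toDual_apply_apply] at hcomp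
  exact hcomp

theorem ConvexOn.add_inner_le_of_hasGradientAt {f : E → ℝ} {f' x : E}
    (hf : ConvexOn ℝ univ f) (hf' : HasGradientAt f f' x) (y : E) :
    f x + ⟪f', y - x⟫ ≤ f y := by
  have hderiv : HasDerivAt (fun t : ℝ => t * (f y - f x) - f (x + t • (y - x)))
      (f y - f x - ⟪f', y - x⟫) 0 := by
    refine ((hasDerivAt_id 0).mul_const _).sub
      (HasGradientAt.hasDerivAt_comp_add_smul (f' := f') ?_) |>.congr_deriv (by simp)
    simpa using hf'
  suffices 0 ≤ f y - f x - ⟪f', y - x⟫ by linarith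
  refine hderiv.nonneg_of_isMinOn_Icc fun t ⟨ht0, ht1⟩ => ?_
  have hconv := hf.2 (mem_univ x) (mem_univ y) (sub_nonneg.2 ht1) ht0 (sub_add_cancel 1 t)
  have hpt : (1 - t) • x + t • y = x + t • (y - x) := by
    rw [smul_sub, sub_smul, one_smul]; abel
  simp only [mem_ofPred_eq, hpt, smul_eq_mul, zero_mul, zero_smul, add_zero, zero_sub] at hconv ⊢
  linarith

theorem le_add_inner_add_mul_sq_of_lipschitz_gradient {f : E → ℝ} {f' : E → E} {L : ℝ}
    (hf : ∀ x, HasGradientAt f (f' x) x) (hlip : ∀ x y, ‖f' x - f' y‖ ≤ L * ‖x - y‖) (x y : E) :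
    f y ≤ f x + ⟪f' x, y - x⟫ + L / 2 * ‖y - x‖ ^ 2 := by
  set v := y - x
  set φ : ℝ → ℝ := fun t => f (x + t • v) - t * ⟪f' x, v⟫ - L / 2 * t ^ 2 * ‖v‖ ^ 2
  have hderiv (t : ℝ) : HasDerivAt φ (⟪f' (x + t • v) - f' x, v⟫ - L * t * ‖v‖ ^ 2) t := by
    have := (((hf (x + t • v)).hasDerivAt_comp_add_smul).sub
      ((hasDerivAt_id t).mul_const ⟪f' x, v⟫)).sub
        (((hasDerivAt_pow 2 t).const_mul (L / 2)).mul_const (‖v‖ ^ 2))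
    refine this.congr_deriv ?_
    simp only [inner_sub_left]
    ring
  have hanti : AntitoneOn φ (Icc 0 1) := by
    refine antitoneOn_of_hasDerivWithinAt_nonpos (convex_Icc 0 1)
      (fun t _ => (hderiv t).continuousAt.continuousWithinAt)
      (fun t _ => (hderiv t).hasDerivWithinAt) fun t ht => ?_
    rw [interior_Icc] at ht
    have hnorm : ‖f' (x + t • v) - f' x‖ ≤ L * (t * ‖v‖) := by
      simpa [norm_smul, abs_of_pos ht.1] using hlip (x + t • v) x
    nlinarith [real_inner_le_norm (f' (x + t • v) - f' x) v, norm_nonneg v]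
  have h01 := hanti (left_mem_Icc.2 zero_le_one) (right_mem_Icc.2 zero_le_one) zero_le_one
  norm_num [φ, v] at h01
  linarith

theorem prox_grad_step_le {f g : E → ℝ} {f' : E → E} {L s : ℝ} (hs : 0 < s) (hsL : s * L ≤ 1)
    (hfconv : ConvexOn ℝ univ f) (hf' : ∀ x, HasGradientAt f (f' x) x)
    (hlip : ∀ x y, ‖f' x - f' y‖ ≤ L * ‖x - y‖) (hgconv : ConvexOn ℝ univ g) {z p : E}
    (hp : IsMinOn (fun u => 1 / (2 * s) * ‖u - (z - s • f' z)‖ ^ 2 + g u) univ p) (y : E) :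
    f p + g p ≤ f y + g y + ⟪s⁻¹ • (z - p), z - y⟫ - s / 2 * ‖s⁻¹ • (z - p)‖ ^ 2 := by
  set G := s⁻¹ • (z - p)
  have hpG : p = z - s • G := by rw [smul_inv_smul₀ hs.ne']; abel
  have hsmooth := le_add_inner_add_mul_sq_of_lipschitz_gradient hf' hlip z p
  have hconv := hfconv.add_inner_le_of_hasGradientAt (hf' z) y
  have hprox := hgconv.add_inner_le_of_isMinOn_prox hp y
  have hres : s⁻¹ • (z - s • f' z - p) = G - f' z := by
    rw [sub_right_comm, smul_sub, inv_smul_smul₀ hs.ne']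
  rw [hres] at hprox
  rw [hpG] at hsmooth hprox ⊢
  simp only [sub_sub_cancel_left, norm_neg, norm_smul, inner_neg_right, inner_sub_left,
    inner_sub_right, inner_smul_right, real_inner_self_eq_norm_sq, Real.norm_eq_abs,
    abs_of_pos hs] at hsmooth hconv hprox ⊢
  have hstep : L / 2 * (s * ‖G‖) ^ 2 ≤ s / 2 * ‖G‖ ^ 2 := by
    nlinarith [mul_le_mul_of_nonneg_right hsL (by positivity : 0 ≤ s * ‖G‖ ^ 2)]
  linarith

end Calculus

theorem ista_subgradient_norm_little_o_general {d : ℕ}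
    (f g : EuclideanSpace ℝ (Fin d) → ℝ)
    (f' : EuclideanSpace ℝ (Fin d) → EuclideanSpace ℝ (Fin d))
    (L s : ℝ) (hs : 0 < s)
    (hfconv : ConvexOn ℝ Set.univ f)
    (hf' : ∀ x, HasGradientAt f (f' x) x)
    (hlip : ∀ x y, ‖f' x - f' y‖ ≤ L * ‖x - y‖)
    (hgconv : ConvexOn ℝ Set.univ g)
    (Φ : EuclideanSpace ℝ (Fin d) → ℝ) (hΦ : ∀ x, Φ x = f x + g x)
    (P : EuclideanSpace ℝ (Fin d) → EuclideanSpace ℝ (Fin d))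
    (hP : ∀ x, IsMinOn (fun z => 1 / (2 * s) * ‖z - (x - s • f' x)‖ ^ 2 + g z) Set.univ (P x))
    (G : EuclideanSpace ℝ (Fin d) → EuclideanSpace ℝ (Fin d))
    (hG : ∀ x, G x = s⁻¹ • (x - P x))
    (xstar : EuclideanSpace ℝ (Fin d)) (hstar : IsMinOn Φ Set.univ xstar)
    (x : ℕ → EuclideanSpace ℝ (Fin d))
    (hx : ∀ k : ℕ, x (k + 1) = x k - s • G (x k))
    (hsL : s ≤ 1 / L) :
    Filter.Tendsto
      (fun k : ℕ => (k : ℝ) * ((k : ℝ) + 1) *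
        Finset.inf' (Finset.range (k + 1)) Finset.nonempty_range_add_one
          (fun i => ‖G (x i)‖ ^ 2))
      Filter.atTop (𝓝 0) := by
  have hsL' : s * L ≤ 1 := by
    rwa [le_div_iff₀ (one_div_pos.1 (hs.trans_le hsL))] at hsL
  have hxP (k : ℕ) : x (k + 1) = P (x k) := by
    rw [hx, hG, smul_inv_smul₀ hs.ne', sub_sub_cancel]
  have hstep (k : ℕ) (y : EuclideanSpace ℝ (Fin d)) :
      Φ (x (k + 1)) ≤ Φ y + ⟪G (x k), x k - y⟫ - s / 2 * ‖G (x k)‖ ^ 2 := by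
    rw [hΦ, hΦ, hxP, hG]
    exact prox_grad_step_le hs hsL' hfconv hf' hlip hgconv (hP (x k)) y
  have hdesc (k : ℕ) :
      Φ (x (k + 1)) - Φ xstar + s / 2 * ‖G (x k)‖ ^ 2 ≤ Φ (x k) - Φ xstar := by
    have := hstep k (x k)
    rw [sub_self, inner_zero_right, add_zero] at this
    linarith
  have hdist (k : ℕ) : 2 * s * (Φ (x (k + 1)) - Φ xstar) ≤
      ‖x k - xstar‖ ^ 2 - ‖x (k + 1) - xstar‖ ^ 2 := by
    have h := two_mul_le_norm_sub_sq_sub_norm_sub_smul_sub_sq (Δ := Φ (x (k + 1)) - Φ xstar)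
      (z := x k) (y := xstar) (G := G (x k)) hs.le (by linarith [hstep k xstar])
    rwa [← hx k] at h
  have hsum : Summable fun k => Φ (x k) - Φ xstar :=
    summable_of_mul_succ_le_sub (by positivity) (fun k => sub_nonneg.2 (hstar (Set.mem_univ _)))
      (fun k => sq_nonneg _) hdist
  exact tendsto_mul_succ_mul_inf'_of_succ_add_le (half_pos hs) (fun k => sq_nonneg _) hdesc hsum

/-- **ISTA little-o rate for the proximal subgradient norm.** For any step size
`0 < s ≤ 1/L`, `lim_{k→∞} k(k+1)·min_{0 ≤ i ≤ k} ‖G_s(x_i)‖² = 0`. -/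
theorem ista_subgradient_norm_little_o {d : ℕ}
    (f g : EuclideanSpace ℝ (Fin d) → ℝ)
    (f' : EuclideanSpace ℝ (Fin d) → EuclideanSpace ℝ (Fin d))
    (L s : ℝ) (hL : 0 < L) (hs : 0 < s)
    (hfconv : ConvexOn ℝ Set.univ f)
    (hf' : ∀ x, HasGradientAt f (f' x) x)
    (hlip : ∀ x y, ‖f' x - f' y‖ ≤ L * ‖x - y‖)
    (hgconv : ConvexOn ℝ Set.univ g) (hgcont : Continuous g)
    (Φ : EuclideanSpace ℝ (Fin d) → ℝ) (hΦ : ∀ x, Φ x = f x + g x)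
    (P : EuclideanSpace ℝ (Fin d) → EuclideanSpace ℝ (Fin d))
    (hP : ∀ x, IsMinOn (fun z => 1 / (2 * s) * ‖z - (x - s • f' x)‖ ^ 2 + g z) Set.univ (P x))
    (G : EuclideanSpace ℝ (Fin d) → EuclideanSpace ℝ (Fin d))
    (hG : ∀ x, G x = s⁻¹ • (x - P x))
    (xstar : EuclideanSpace ℝ (Fin d)) (hstar : IsMinOn Φ Set.univ xstar)
    (x : ℕ → EuclideanSpace ℝ (Fin d))
    (hx : ∀ k : ℕ, x (k + 1) = x k - s • G (x k))
    (hsL : s ≤ 1 / L) :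
    Filter.Tendsto
      (fun k : ℕ => (k : ℝ) * ((k : ℝ) + 1) *
        Finset.inf' (Finset.range (k + 1)) Finset.nonempty_range_add_one
          (fun i => ‖G (x i)‖ ^ 2))
      Filter.atTop (𝓝 0) :=
  ista_subgradient_norm_little_o_general f g f' L s hs hfconv hf' hlip hgconv Φ hΦ P hP G hG xstar
    hstar x hx hsL
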